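/- For every (x*, r) ∈ X* × ℝ the following are equivalent: (i) every x ∈ X satisfying σ_{𝒜_t}(x) ≤ b_t for all t ∈ T also satisfies ⟨x*, x⟩ ≥ r; (ii) (x*, r) ∈ −oco cone[ (⋃_{t∈T} 𝒜_t × {b_t}) ∪ {(0_{X*},1)} ], where cone A := {λa : λ ≥ 0, a ∈ A} and oco denotes the closed convex hull in X* × ℝ (weak*-topology on X* times the usual topology on ℝ). -/

import Mathlib

/-!
Both sides say that the affine functional `x ↦ ⟨x*, x⟩ - r` is a consequence of the system.
If `-(x*, r)` lies in the closed convex cone generated by the constraint data `(p, b_t)` and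
`(0, 1)`, then the inequality follows because it holds on every generator and is preserved
under conic combinations and limits. Conversely, if it does not lie in the cone, Hahn–Banach
separation in `X* × ℝ` gives a functional `(p, s) ↦ p x₀ + s c` with `c ≥ 0` that is nonnegative
on the cone and negative at `-(x*, r)`. Every continuous functional on the weak*-dual is an
evaluation, which is why `x₀` lies in `X`. If `c > 0`, the point `-x₀ / c` is feasible and
violates the inequality. If `c = 0`, then `-x₀` is a recession direction of the feasible set
along which `x*` decreases without bound.
-/

open Pointwise

section
variable {X : Type*} [AddCommGroup X] [Module ℝ X] [TopologicalSpace X]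

instance WeakDual.instLocallyConvexSpace : LocallyConvexSpace ℝ (WeakDual ℝ X) :=
  WeakBilin.locallyConvexSpace

@[simp] theorem WeakDual.zero_apply (x : X) : (0 : WeakDual ℝ X) x = 0 := rfl

@[simp] theorem WeakDual.neg_apply (p : WeakDual ℝ X) (x : X) : (-p) x = -p x := rfl

theorem WeakDual.exists_eval_eq (f : WeakDual ℝ X →L[ℝ] ℝ) :
    ∃ x : X, ∀ p : WeakDual ℝ X, f p = p x := by
  obtain ⟨x, rfl⟩ := LinearMap.dualEmbedding_surjective (topDualPairing ℝ X) f
  exact ⟨x, fun _ => rfl⟩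

theorem WeakDual.exists_prod_apply_eq (f : WeakDual ℝ X × ℝ →L[ℝ] ℝ) :
    ∃ x : X, ∀ q : WeakDual ℝ X × ℝ, f q = q.1 x + q.2 * f (0, 1) := by
  obtain ⟨x, hx⟩ := exists_eval_eq (f.comp (.inl ℝ _ ℝ))
  refine ⟨x, fun ⟨p, s⟩ => ?_⟩
  calc f (p, s) = f (p, 0) + s * f (0, 1) := by
        rw [← smul_eq_mul, ← map_smul, ← map_add]; simp
    _ = p x + s * f (0, 1) := by rw [← hx p]; rfl

theorem convexHull_rays_eq_hull {E : Type*} [AddCommGroup E] [Module ℝ E] {s : Set E}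
    (hs : s.Nonempty) :
    convexHull ℝ {q | ∃ l : ℝ, 0 ≤ l ∧ ∃ a ∈ s, q = l • a} = PointedCone.hull ℝ s := by
  set rays := {q | ∃ l : ℝ, 0 ≤ l ∧ ∃ a ∈ s, q = l • a}
  have smul_mem : ∀ c : ℝ, 0 ≤ c → ∀ x ∈ convexHull ℝ rays, c • x ∈ convexHull ℝ rays := by
    intro c hc x hx
    refine convexHull_mono ?_ ((convexHull_smul c rays).symm ▸ Set.smul_mem_smul_set hx)
    rintro _ ⟨_, ⟨l, hl, a, ha, rfl⟩, rfl⟩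
    exact ⟨c * l, mul_nonneg hc hl, a, ha, smul_smul c l a⟩
  refine subset_antisymm (convexHull_min ?_ (PointedCone.hull ℝ s).convex) fun x hx => ?_
  · rintro _ ⟨l, hl, a, ha, rfl⟩
    exact (PointedCone.hull ℝ s).smul_mem hl (PointedCone.subset_hull ha)
  induction hx using Submodule.span_induction with
  | mem a ha => exact subset_convexHull ℝ _ ⟨1, zero_le_one, a, ha, (one_smul ℝ a).symm⟩
  | zero =>
    obtain ⟨a, ha⟩ := hs
    exact subset_convexHull ℝ _ ⟨0, le_rfl, a, ha, (zero_smul ℝ a).symm⟩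
  | add x y _ _ hx hy =>
    -- `x + y` is the midpoint of `2 • x` and `2 • y`
    have := convex_convexHull ℝ rays (smul_mem 2 zero_le_two x hx) (smul_mem 2 zero_le_two y hy)
      (by norm_num : (0 : ℝ) ≤ 1 / 2) (by norm_num : (0 : ℝ) ≤ 1 / 2) (by norm_num)
    simpa [smul_smul] using this
  | smul c x _ hx => exact smul_mem c c.2 x hx

noncomputable abbrev characteristicCone (S : Set (WeakDual ℝ X × ℝ)) :
    ProperCone ℝ (WeakDual ℝ X × ℝ) :=
  Submodule.closure (PointedCone.hull ℝ (S ∪ {(0, 1)}))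

theorem le_of_neg_mem_characteristicCone {S : Set (WeakDual ℝ X × ℝ)} {xs : WeakDual ℝ X}
    {r : ℝ} (h : -(xs, r) ∈ characteristicCone S) {x : X} (hx : ∀ q ∈ S, q.1 x ≤ q.2) :
    r ≤ xs x := by
  let slack : WeakDual ℝ X × ℝ →L[ℝ] ℝ :=
    .snd ℝ _ ℝ - (WeakBilin.eval (topDualPairing ℝ X) x : WeakDual ℝ X →L[ℝ] ℝ).comp
      (.fst ℝ (WeakDual ℝ X) ℝ)
  have hslack : ∀ q, slack q = q.2 - q.1 x := fun _ => rfl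
  have hle : characteristicCone S ≤ (ProperCone.positive ℝ ℝ).comap slack := by
    refine Submodule.closure_le.2 (Submodule.span_le.2 ?_)
    rintro q (hq | rfl)
    · simpa [hslack] using hx q hq
    · simp [hslack]
  simpa [hslack, neg_le_neg_iff] using hle h

theorem exists_feasible_lt_of_certificate {S : Set (WeakDual ℝ X × ℝ)} {xs : WeakDual ℝ X}
    {r : ℝ} (hF : ∃ x : X, ∀ q ∈ S, q.1 x ≤ q.2) {x₀ : X} {c : ℝ} (hc : 0 ≤ c)
    (hS : ∀ q ∈ S, 0 ≤ q.1 x₀ + q.2 * c) (hxs : 0 < xs x₀ + r * c) :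
    ∃ x : X, (∀ q ∈ S, q.1 x ≤ q.2) ∧ xs x < r := by
  rcases hc.eq_or_lt with rfl | hc
  · obtain ⟨x, hx⟩ := hF
    simp only [mul_zero, add_zero] at hS hxs
    obtain ⟨n, hn⟩ := exists_nat_gt ((xs x - r) / xs x₀)
    refine ⟨x - (n : ℝ) • x₀, fun q hq => ?_, ?_⟩
    · simp only [map_sub, map_smul, smul_eq_mul]
      nlinarith [hx q hq, hS q hq, n.cast_nonneg (α := ℝ)]
    · rw [div_lt_iff₀ hxs] at hn
      simp only [map_sub, map_smul, smul_eq_mul]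
      linarith
  · refine ⟨-c⁻¹ • x₀, fun q hq => ?_, ?_⟩
    · calc q.1 (-c⁻¹ • x₀) = c⁻¹ * -q.1 x₀ := by simp
        _ ≤ c⁻¹ * (q.2 * c) := by gcongr; linarith [hS q hq]
        _ = q.2 := by field_simp
    · calc xs (-c⁻¹ • x₀) = c⁻¹ * -xs x₀ := by simp
        _ < c⁻¹ * (r * c) := by gcongr; linarith
        _ = r := by field_simp

theorem neg_mem_characteristicCone_of_forall_le {S : Set (WeakDual ℝ X × ℝ)}
    {xs : WeakDual ℝ X} {r : ℝ} (hF : ∃ x : X, ∀ q ∈ S, q.1 x ≤ q.2)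
    (h : ∀ x : X, (∀ q ∈ S, q.1 x ≤ q.2) → r ≤ xs x) : -(xs, r) ∈ characteristicCone S := by
  by_contra hn
  obtain ⟨f, hf, hf_neg⟩ := (characteristicCone S).hyperplane_separation_point hn
  obtain ⟨x₀, hx₀⟩ := WeakDual.exists_prod_apply_eq f
  have hgen : ∀ q ∈ S ∪ {(0, 1)}, 0 ≤ f q := fun q hq =>
    hf q (subset_closure (PointedCone.subset_hull hq))
  have hc : 0 ≤ f (0, 1) := hgen _ (Or.inr rfl)
  obtain ⟨x, hx, hlt⟩ := exists_feasible_lt_of_certificate (xs := xs) (r := r) hF hc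
    (fun q hq => hx₀ q ▸ hgen q (Or.inl hq)) (by rw [hx₀] at hf_neg; simp at hf_neg; linarith)
  exact (h x hx).not_gt hlt

theorem forall_le_iff_neg_mem_characteristicCone {S : Set (WeakDual ℝ X × ℝ)}
    (hF : ∃ x : X, ∀ q ∈ S, q.1 x ≤ q.2) (xs : WeakDual ℝ X) (r : ℝ) :
    (∀ x : X, (∀ q ∈ S, q.1 x ≤ q.2) → r ≤ xs x) ↔ -(xs, r) ∈ characteristicCone S :=
  ⟨neg_mem_characteristicCone_of_forall_le hF, fun h _ => le_of_neg_mem_characteristicCone h⟩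

end

theorem stmt2_general
    {X : Type*}
    [AddCommGroup X] [Module ℝ X] [TopologicalSpace X]
    {T : Type*}
    (A : T → Set (WeakDual ℝ X))
    (b : T → ℝ)
    (hF : {x : X | ∀ t, ∀ p ∈ A t, p x ≤ b t}.Nonempty)
    (xs : WeakDual ℝ X) (r : ℝ) :
    (∀ x : X, (∀ t, ∀ p ∈ A t, p x ≤ b t) → r ≤ xs x) ↔
      (xs, r) ∈ -closure (convexHull ℝ
        {q : WeakDual ℝ X × ℝ | ∃ l : ℝ, 0 ≤ l ∧
          ∃ a ∈ (⋃ t, (A t) ×ˢ ({b t} : Set ℝ)) ∪ {((0 : WeakDual ℝ X), (1 : ℝ))},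
            q = l • a}) := by
  have feasible_iff (x : X) : (∀ t, ∀ p ∈ A t, p x ≤ b t) ↔
      ∀ q ∈ ⋃ t, A t ×ˢ ({b t} : Set ℝ), q.1 x ≤ q.2 := by
    refine ⟨fun h q hq => ?_, fun h t p hp => h (p, b t) (Set.mem_iUnion.2 ⟨t, hp, rfl⟩)⟩
    obtain ⟨t, hp, hb⟩ := Set.mem_iUnion.1 hq
    exact hb ▸ h t q.1 hp
  rw [convexHull_rays_eq_hull (Set.union_nonempty.2 (Or.inr (Set.singleton_nonempty _))),
    Set.mem_neg]
  simp_rw [feasible_iff] at hF ⊢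
  exact forall_le_iff_neg_mem_characteristicCone hF xs r

/-- Robust Farkas lemma for systems of sub-affine functions (Corollary 2.2 / `lem_FL3`). -/
theorem stmt2
    {X : Type*}
    [AddCommGroup X] [Module ℝ X] [TopologicalSpace X] [IsTopologicalAddGroup X]
    [ContinuousSMul ℝ X] [LocallyConvexSpace ℝ X] [T2Space X]
    {T : Type*} [Nonempty T]
    (A : T → Set (WeakDual ℝ X)) (hA_ne : ∀ t, (A t).Nonempty)
    (hA_closed : ∀ t, IsClosed (A t)) (hA_conv : ∀ t, Convex ℝ (A t))
    (b : T → ℝ)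
    (hF : {x : X | ∀ t, ∀ p ∈ A t, p x ≤ b t}.Nonempty)
    (xs : WeakDual ℝ X) (r : ℝ) :
    (∀ x : X, (∀ t, ∀ p ∈ A t, p x ≤ b t) → r ≤ xs x) ↔
      (xs, r) ∈ -closure (convexHull ℝ
        {q : WeakDual ℝ X × ℝ | ∃ l : ℝ, 0 ≤ l ∧
          ∃ a ∈ (⋃ t, (A t) ×ˢ ({b t} : Set ℝ)) ∪ {((0 : WeakDual ℝ X), (1 : ℝ))},
            q = l • a}) :=
  stmt2_general A b hF xs r
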